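/- Let ρ(x) = ln(1 + e^x) be the softplus function, and for s ≥ 1 define ψ^s : ℝ → ℝ by ψ^s(x) = (1/s)·(ρ(s(x+2)) − ρ(s(x+1)) − ρ(s(x−1)) + ρ(s(x−2))). Then for all N ∈ ℕ, all s ≥ 1 and all x ∈ (0,1), |1 − ∑_{m=0}^{N} ψ^s(3N(x − m/N))| ≤ 2·e^{−s}. (The softplus bump functions form an approximate partition of unity on (0,1), exponentially close to an exact one in s.) -/
import Mathlib
set_option maxHeartbeats 1000000


/-- The softplus activation function `ρ(x) = ln(1 + e^x)`. -/
noncomputable def softplus (x : ℝ) : ℝ := Real.log (1 + Real.exp x)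

/-- The one-dimensional softplus bump of order `τ = 1`:
`ψ^s(x) = (1/s)(ρ(s(x+2)) - ρ(s(x+1)) - ρ(s(x-1)) + ρ(s(x-2)))`. -/
noncomputable def psiSoftplus (s x : ℝ) : ℝ :=
  (1 / s) * (softplus (s * (x + 2)) - softplus (s * (x + 1)) -
    softplus (s * (x - 1)) + softplus (s * (x - 2)))

lemma softplus_nonneg (t : ℝ) : 0 ≤ softplus t :=
  Real.log_nonneg (by nlinarith [Real.exp_pos t])

lemma softplus_le_exp (t : ℝ) : softplus t ≤ Real.exp t := by
  have h := Real.log_le_sub_one_of_pos (x := 1 + Real.exp t) (by positivity)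
  unfold softplus
  linarith

lemma softplus_flip (t : ℝ) : softplus t = t + softplus (-t) := by
  have h2 : Real.exp t * Real.exp (-t) = 1 := by
    rw [← Real.exp_add]; simp
  have h : (1 : ℝ) + Real.exp t = Real.exp t * (1 + Real.exp (-t)) := by
    rw [mul_add, mul_one, h2]; ring
  unfold softplus
  rw [h, Real.log_mul (Real.exp_ne_zero t) (by positivity), Real.log_exp]

/-- The softplus bumps form an approximate partition of unity on
`(0,1)`, exponentially close to an exact one: for all `N ≥ 1`, `s ≥ 1`, `x ∈ (0,1)`,
`|1 - ∑_{m=0}^{N} ψ^s(3N(x - m/N))| ≤ 2 e^{-s}`. -/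
theorem softplus_partition_of_unity
    (N : ℕ) (hN : 1 ≤ N) (s : ℝ) (hs : 1 ≤ s) (x : ℝ) (hx0 : 0 < x) (hx1 : x < 1) :
    |1 - ∑ m ∈ Finset.range (N + 1),
        psiSoftplus s (3 * (N : ℝ) * (x - (m : ℝ) / (N : ℝ)))| ≤
      2 * Real.exp (-s) := by
  have hN0 : (N : ℝ) ≠ 0 := Nat.cast_ne_zero.mpr (by omega)
  have hs0 : 0 < s := lt_of_lt_of_le one_pos hs
  set y : ℝ := 3 * N * x with hy
  set F : ℕ → ℝ := fun m =>
    softplus (s * (y - 3 * m + 2)) / s - softplus (s * (y - 3 * m + 1)) / s with hF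
  have hsum : ∑ m ∈ Finset.range (N + 1),
      psiSoftplus s (3 * (N : ℝ) * (x - (m : ℝ) / (N : ℝ))) = F 0 - F (N + 1) := by
    rw [← Finset.sum_range_sub' F (N + 1)]
    refine Finset.sum_congr rfl fun m _ => ?_
    have harg : 3 * (N : ℝ) * (x - (m : ℝ) / (N : ℝ)) = y - 3 * m := by
      field_simp [hy]; ring
    rw [harg]
    unfold psiSoftplus
    simp only [hF]
    push_cast
    have e1 : s * (y - 3 * (m : ℝ) - 1) = s * (y - 3 * ((m : ℝ) + 1) + 2) := by ring
    have e2 : s * (y - 3 * (m : ℝ) - 2) = s * (y - 3 * ((m : ℝ) + 1) + 1) := by ring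
    rw [e1, e2]
    field_simp
    ring
  rw [hsum]
  simp only [hF]
  push_cast
  -- abbreviations
  set A := softplus (-(s * (y - 3 * 0 + 2))) with hA
  set B := softplus (-(s * (y - 3 * 0 + 1))) with hB
  set C := softplus (s * (y - 3 * ((N : ℝ) + 1) + 2)) with hC
  set D := softplus (s * (y - 3 * ((N : ℝ) + 1) + 1)) with hD
  have hflip1 : softplus (s * (y - 3 * 0 + 2)) = s * (y - 3 * 0 + 2) + A :=
    softplus_flip _
  have hflip2 : softplus (s * (y - 3 * 0 + 1)) = s * (y - 3 * 0 + 1) + B :=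
    softplus_flip _
  have hval : 1 - (softplus (s * (y - 3 * 0 + 2)) / s - softplus (s * (y - 3 * 0 + 1)) / s -
      (softplus (s * (y - 3 * ((N : ℝ) + 1) + 2)) / s -
        softplus (s * (y - 3 * ((N : ℝ) + 1) + 1)) / s)) = (B - A + C - D) / s := by
    rw [hflip1, hflip2, ← hC, ← hD]
    field_simp
    ring
  rw [hval]
  -- y bounds
  have hy0 : 0 < y := by positivity
  have hN1 : (1 : ℝ) ≤ (N : ℝ) := by exact_mod_cast hN
  have hy3N : y < 3 * N := by
    have : 3 * (N : ℝ) * x < 3 * N * 1 := by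
      apply mul_lt_mul_of_pos_left hx1; positivity
    simpa [hy] using this
  -- each of A B C D in [0, exp(-s)]
  have hAb : A ≤ Real.exp (-s) := by
    refine (softplus_le_exp _).trans (Real.exp_le_exp.mpr ?_)
    nlinarith
  have hBb : B ≤ Real.exp (-s) := by
    refine (softplus_le_exp _).trans (Real.exp_le_exp.mpr ?_)
    nlinarith
  have hCb : C ≤ Real.exp (-s) := by
    refine (softplus_le_exp _).trans (Real.exp_le_exp.mpr ?_)
    nlinarith
  have hDb : D ≤ Real.exp (-s) := by
    refine (softplus_le_exp _).trans (Real.exp_le_exp.mpr ?_)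
    nlinarith
  have hA0 : 0 ≤ A := softplus_nonneg _
  have hB0 : 0 ≤ B := softplus_nonneg _
  have hC0 : 0 ≤ C := softplus_nonneg _
  have hD0 : 0 ≤ D := softplus_nonneg _
  have habs : |B - A + C - D| ≤ 2 * Real.exp (-s) := by
    rw [abs_le]; constructor <;> linarith
  rw [abs_div, abs_of_pos hs0]
  calc |B - A + C - D| / s ≤ (2 * Real.exp (-s)) / s := by gcongr
      _ ≤ 2 * Real.exp (-s) := by
        rw [div_le_iff₀ hs0]; nlinarith [Real.exp_pos (-s)]
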